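/- arXiv:math/0110243 — 3 statements merged into one kernel-verified Lean document; each statement's English description precedes it below -/
import Mathlib

section
/- Let k be a field of characteristic ≠ 2 and σ the involution of k((T)) with σ(T) = -T. Every p ∈ k((T))^× satisfying p·σ(p) = 1 is of the form p = ε · s/σ(s) for some sign ε ∈ {1, -1} and some unit s of k[[T]]. -/
/-!
The twist `σ` only changes signs of coefficients, so it preserves the order; hence
`p * σ p = 1` forces `ord p = 0`, and comparing constant terms gives `ε := p₀` with `ε² = 1`.
Then `s := 1 + ε p` is a power series with constant term `2`, a unit, and the identity
`p (1 + ε σ p) = ε (1 + ε p)` is exactly `p = ε · s / σ s`.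
-/

open HahnSeries

theorem HahnSeries.order_eq_of_coeff_eq_zero_iff {Γ R S : Type*} [Zero Γ] [LinearOrder Γ]
    [Zero R] [Zero S] {x : R⟦Γ⟧} {y : S⟦Γ⟧} (h : ∀ g, x.coeff g = 0 ↔ y.coeff g = 0) :
    x.order = y.order := by
  rcases eq_or_ne x 0 with rfl | hx
  · have hy : y = 0 := by ext g; simpa using h g
    simp [hy]
  have hy : y ≠ 0 := fun hy => hx (by ext g; simpa [hy] using h g)
  apply le_antisymm
  · exact order_le_of_coeff_ne_zero (mt (h _).1 (coeff_order_eq_zero.not.2 hy))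
  · exact order_le_of_coeff_ne_zero (mt (h _).2 (coeff_order_eq_zero.not.2 hx))

theorem HahnSeries.order_eq_zero_of_mul_eq_one {R : Type*} [Semiring R] [NoZeroDivisors R]
    [Nontrivial R] {x y : R⟦ℤ⟧} (h : x * y = 1) (hyx : y.order = x.order) : x.order = 0 := by
  have hxy := order_mul (left_ne_zero_of_mul_eq_one h) (right_ne_zero_of_mul_eq_one h)
  rw [h, order_one, hyx] at hxy
  omega

theorem HahnSeries.coeff_zero_mul_coeff_zero_of_mul_eq_one {Γ R : Type*} [AddCommMonoid Γ]
    [LinearOrder Γ] [IsOrderedCancelAddMonoid Γ] [Semiring R] {x y : R⟦Γ⟧} (h : x * y = 1)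
    (hx : x.order = 0) (hy : y.order = 0) : x.coeff 0 * y.coeff 0 = 1 := by
  have hlead := coeff_mul_order_add_order x y
  rw [h, hx, hy, add_zero, leadingCoeff_eq, leadingCoeff_eq, hx, hy] at hlead
  simpa using hlead.symm

theorem LaurentSeries.order_eq_of_coeff_eq_neg_one_zpow_mul {k : Type*} [DivisionRing k]
    {x y : LaurentSeries k} (hxy : ∀ n : ℤ, y.coeff n = (-1 : k) ^ n * x.coeff n) :
    y.order = x.order :=
  (order_eq_of_coeff_eq_zero_iff fun n => by
    rw [hxy, mul_eq_zero_iff_left (zpow_ne_zero n (by norm_num))]).symm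

theorem LaurentSeries.ofPowerSeries_powerSeriesPart_of_order_eq_zero {R : Type*} [Semiring R]
    {x : LaurentSeries R} (hx : x.order = 0) : ofPowerSeries ℤ R x.powerSeriesPart = x := by
  simpa [hx] using x.single_order_mul_powerSeriesPart

theorem eq_mul_div_map_of_mul_map_eq_one {A : Type*} [Field A] (σ : A →+* A) {p e : A}
    (hp : p * σ p = 1) (he : e * e = 1) (hσe : σ e = e) (hs : 1 + e * p ≠ 0) :
    p = e * ((1 + e * p) / σ (1 + e * p)) := by
  rw [mul_div_assoc', eq_div_iff ((map_ne_zero σ).2 hs), map_add, map_one, map_mul, hσe]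
  linear_combination e * hp - p * he

theorem norm_one_iff_ratio_general (k : Type*) [Field k] (h2 : (2 : k) ≠ 0)
    (σ : LaurentSeries k ≃ₐ[k] LaurentSeries k)
    (hσ : ∀ (r : LaurentSeries k) (n : ℤ), (σ r).coeff n = (-1 : k) ^ n * r.coeff n)
    (p : LaurentSeries k) (hp : p * σ p = 1) :
    ∃ (ε : LaurentSeries k) (s : (PowerSeries k)ˣ), (ε = 1 ∨ ε = -1) ∧
      p = ε * (HahnSeries.ofPowerSeries ℤ k (s : PowerSeries k) /
        σ (HahnSeries.ofPowerSeries ℤ k (s : PowerSeries k))) := by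
  have hσord := LaurentSeries.order_eq_of_coeff_eq_neg_one_zpow_mul (hσ p)
  have hord : p.order = 0 := order_eq_zero_of_mul_eq_one hp hσord
  set ε := p.coeff 0
  have hε : ε * ε = 1 := by
    simpa [hσ] using coeff_zero_mul_coeff_zero_of_mul_eq_one hp hord (hσord.trans hord)
  set s := 1 + PowerSeries.C ε * p.powerSeriesPart
  have hs : ofPowerSeries ℤ k s = 1 + algebraMap k _ ε * p := by
    rw [map_add, map_one, map_mul, ofPowerSeries_C,
      LaurentSeries.ofPowerSeries_powerSeriesPart_of_order_eq_zero hord,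
      LaurentSeries.algebraMap_apply]
  have hs2 : PowerSeries.constantCoeff s = 2 := by
    rw [map_add, map_one, map_mul, PowerSeries.constantCoeff_C,
      ← PowerSeries.coeff_zero_eq_constantCoeff_apply, LaurentSeries.powerSeriesPart_coeff, hord,
      Nat.cast_zero, add_zero, hε, one_add_one_eq_two]
  have hsu : IsUnit s := PowerSeries.isUnit_iff_constantCoeff.2 (hs2 ▸ h2.isUnit)
  refine ⟨algebraMap k _ ε, hsu.unit, ?_, ?_⟩
  · rcases mul_self_eq_one_iff.1 hε with h | h <;> simp [h]
  · rw [IsUnit.unit_spec, hs]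
    exact eq_mul_div_map_of_mul_map_eq_one σ.toRingHom hp (by rw [← map_mul, hε, map_one])
      (σ.commutes ε) (hs ▸ (hsu.map (ofPowerSeries ℤ k)).ne_zero)

/-- Let `char k ≠ 2` and `σ` be the involution of `k((T))` with `σ(T) = -T`. Every
`p ∈ k((T))ˣ` with `p · σ(p) = 1` is of the form `p = ε · s / σ(s)` for some sign
`ε ∈ {1, -1}` and some unit `s` of `k[[T]]`. -/
theorem norm_one_iff_ratio (k : Type*) [Field k] (h2 : (2 : k) ≠ 0)
    (σ : LaurentSeries k ≃ₐ[k] LaurentSeries k)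
    (hσ : ∀ (r : LaurentSeries k) (n : ℤ), (σ r).coeff n = (-1 : k) ^ n * r.coeff n)
    (p : LaurentSeries k) (hp0 : p ≠ 0) (hp : p * σ p = 1) :
    ∃ (ε : LaurentSeries k) (s : (PowerSeries k)ˣ), (ε = 1 ∨ ε = -1) ∧
      p = ε * (HahnSeries.ofPowerSeries ℤ k (s : PowerSeries k) /
        σ (HahnSeries.ofPowerSeries ℤ k (s : PowerSeries k))) :=
  norm_one_iff_ratio_general k h2 σ hσ p hp
end

section
/- Let k be a field of characteristic ≠ 2 and σ the involution of k((T)) with σ(T) = -T. Let N = {p ∈ k((T))^× : p·σ(p) = 1} and B = {s/σ(s) : s ∈ k[[T]]^×}. Then B is a subgroup of N, and the quotient group N/B is cyclic of order 2, generated by the class of -1. -/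
/-!
A norm-one `p` has order `0`, since `σ` preserves orders, and constant term `±1`, since the
constant term of `p * σ p` is its square. If the constant term is `1`, then `s = 1 + p` is a
power series with constant term `2`, hence a unit, and `σ s = 1 + p⁻¹ = s / p` gives
`s / σ s = p` (the Hilbert 90 formula). Conversely `s / σ s = -1` would force the constant term
of `s` to equal its own negative, i.e. to vanish.
-/

open HahnSeries

theorem div_map_one_add_of_mul_map_eq_one {K F : Type*} [Field K] [FunLike F K K]
    [RingHomClass F K K] (σ : F) {p : K} (hp : p * σ p = 1) (h : 1 + p ≠ 0) :
    (1 + p) / σ (1 + p) = p := by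
  rw [div_eq_iff ((map_ne_zero σ).mpr h), map_add, map_one, mul_add, hp, mul_one, add_comm]

theorem MonoidHom.range_div_le_ker_mul {G : Type*} [CommGroup G] (τ : G →* G)
    (hτ : ∀ g, τ (τ g) = g) : (MonoidHom.id G / τ).range ≤ (MonoidHom.id G * τ).ker := by
  rintro _ ⟨g, rfl⟩
  simp [hτ]

theorem HahnSeries.coeff_zero_ofPowerSeries {R : Type*} [Semiring R] (x : PowerSeries R) :
    (ofPowerSeries ℤ R x).coeff 0 = PowerSeries.constantCoeff x := by
  simpa using ofPowerSeries_apply_coeff (Γ := ℤ) x 0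

namespace LaurentSeries

variable {k F : Type*} [Field k] [FunLike F (LaurentSeries k) (LaurentSeries k)] {σ : F}
  (hσ : ∀ (r : LaurentSeries k) (n : ℤ), (σ r).coeff n = (-1 : k) ^ n * r.coeff n)
include hσ

theorem map_map_eq_self (x : LaurentSeries k) : σ (σ x) = x := by
  ext n
  rw [hσ, hσ, ← mul_assoc, ← mul_zpow, neg_mul_neg, one_mul, one_zpow, one_mul]

theorem coeff_map_ne_zero_iff {x : LaurentSeries k} {n : ℤ} :
    (σ x).coeff n ≠ 0 ↔ x.coeff n ≠ 0 := by
  rw [hσ]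
  exact mul_ne_zero_iff_left (zpow_ne_zero n (neg_ne_zero.mpr one_ne_zero))

theorem coeff_zero_map (x : LaurentSeries k) : (σ x).coeff 0 = x.coeff 0 := by
  simp [hσ]

variable [RingHomClass F (LaurentSeries k) (LaurentSeries k)]

theorem order_map (x : LaurentSeries k) : (σ x).order = x.order := by
  rcases eq_or_ne x 0 with rfl | hx
  · simp
  have hσx : σ x ≠ 0 := (map_ne_zero σ).mpr hx
  exact le_antisymm
    (order_le_of_coeff_ne_zero ((coeff_map_ne_zero_iff hσ).mpr (coeff_order_eq_zero.not.mpr hx)))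
    (order_le_of_coeff_ne_zero ((coeff_map_ne_zero_iff hσ).mp (coeff_order_eq_zero.not.mpr hσx)))

theorem order_eq_zero_of_mul_map_eq_one {p : LaurentSeries k} (hp : p * σ p = 1) :
    p.order = 0 := by
  have hp0 : p ≠ 0 := left_ne_zero_of_mul_eq_one hp
  have h := order_mul hp0 ((map_ne_zero σ).mpr hp0)
  rw [hp, order_map hσ, order_one] at h
  omega

theorem coeff_zero_mul_self_of_mul_map_eq_one {p : LaurentSeries k} (hp : p * σ p = 1) :
    p.coeff 0 * p.coeff 0 = 1 := by
  have h := coeff_mul_order_add_order p (σ p)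
  rw [leadingCoeff_eq, leadingCoeff_eq, order_map hσ, order_eq_zero_of_mul_map_eq_one hσ hp,
    add_zero, hp, coeff_zero_map hσ] at h
  simpa using h.symm

theorem exists_div_map_eq_of_mul_map_eq_one (h2 : (2 : k) ≠ 0) {p : LaurentSeries k}
    (hp : p * σ p = 1) (hc : p.coeff 0 = 1) :
    ∃ s : (PowerSeries k)ˣ, ofPowerSeries ℤ k s / σ (ofPowerSeries ℤ k s) = p := by
  have hord := order_eq_zero_of_mul_map_eq_one hσ hp
  set u : PowerSeries k := 1 + p.powerSeriesPart
  have hu : ofPowerSeries ℤ k u = 1 + p := by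
    rw [map_add, map_one, ofPowerSeries_powerSeriesPart, hord, neg_zero, single_zero_one, one_mul]
  have hu0 : PowerSeries.constantCoeff u = 2 := by
    rw [← coeff_zero_ofPowerSeries, hu, coeff_add, coeff_one, if_pos rfl, hc, one_add_one_eq_two]
  have hu_unit : IsUnit u := PowerSeries.isUnit_iff_constantCoeff.mpr (hu0 ▸ h2.isUnit)
  have h1p : (1 : LaurentSeries k) + p ≠ 0 :=
    hu ▸ (map_ne_zero_iff _ ofPowerSeries_injective).mpr hu_unit.ne_zero
  refine ⟨hu_unit.unit, ?_⟩
  rw [IsUnit.unit_spec, hu, div_map_one_add_of_mul_map_eq_one σ hp h1p]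

theorem exists_div_map_eq_or_eq_neg_of_mul_map_eq_one (h2 : (2 : k) ≠ 0) {p : LaurentSeries k}
    (hp : p * σ p = 1) :
    (∃ s : (PowerSeries k)ˣ, ofPowerSeries ℤ k s / σ (ofPowerSeries ℤ k s) = p) ∨
      ∃ s : (PowerSeries k)ˣ, ofPowerSeries ℤ k s / σ (ofPowerSeries ℤ k s) = -p := by
  rcases mul_self_eq_one_iff.mp (coeff_zero_mul_self_of_mul_map_eq_one hσ hp) with hc | hc
  · exact .inl (exists_div_map_eq_of_mul_map_eq_one hσ h2 hp hc)
  · have hp' : -p * σ (-p) = 1 := by rwa [map_neg, neg_mul_neg]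
    exact .inr (exists_div_map_eq_of_mul_map_eq_one hσ h2 hp' (by rw [coeff_neg, hc, neg_neg]))

theorem div_map_ne_neg_one (h2 : (2 : k) ≠ 0) {a : LaurentSeries k} (ha : a.coeff 0 ≠ 0) :
    a / σ a ≠ -1 := by
  intro h
  have hσa : σ a ≠ 0 := (map_ne_zero σ).mpr (ne_zero_of_coeff_ne_zero ha)
  have h0 : a.coeff 0 = -a.coeff 0 := by
    simpa [coeff_zero_map hσ] using congrArg (coeff · 0) ((div_eq_iff hσa).mp h)
  have h20 : (2 : k) * a.coeff 0 = 0 := by linear_combination h0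
  exact ha ((mul_eq_zero.mp h20).resolve_left h2)

end LaurentSeries

open LaurentSeries in
/-- Let `char k ≠ 2`, `σ` the involution of `k((T))` with `σ(T) = -T` (acting on units via
`σu`). Then `N = {p : p·σ(p) = 1}` and `B = {s/σ(s) : s ∈ k[[T]]ˣ}` are subgroups of
`k((T))ˣ` with `B ≤ N`, and the quotient `N/B` is cyclic of order 2, generated by the
class of `-1`: the class of `-1` is nontrivial, its square is trivial, and every element
of `N` lies in `B` or in `(-1)·B`. -/
theorem norm_one_mod_coboundaries (k : Type*) [Field k] (h2 : (2 : k) ≠ 0)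
    (σ : LaurentSeries k ≃ₐ[k] LaurentSeries k)
    (hσ : ∀ (r : LaurentSeries k) (n : ℤ), (σ r).coeff n = (-1 : k) ^ n * r.coeff n)
    (σu : (LaurentSeries k)ˣ →* (LaurentSeries k)ˣ)
    (hσu : ∀ p : (LaurentSeries k)ˣ, ((σu p : (LaurentSeries k)ˣ) : LaurentSeries k) = σ p) :
    ∃ (N B : Subgroup (LaurentSeries k)ˣ),
      (N : Set (LaurentSeries k)ˣ) = {p | p * σu p = 1} ∧
      (B : Set (LaurentSeries k)ˣ) = {p : (LaurentSeries k)ˣ | ∃ s : (PowerSeries k)ˣ,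
        (p : LaurentSeries k) = HahnSeries.ofPowerSeries ℤ k (s : PowerSeries k) /
          σ (HahnSeries.ofPowerSeries ℤ k (s : PowerSeries k))} ∧
      B ≤ N ∧
      ∃ m : (LaurentSeries k)ˣ, (m : LaurentSeries k) = -1 ∧ m ∈ N ∧ m ∉ B ∧ m * m ∈ B ∧
        ∀ p ∈ N, p ∈ B ∨ ∃ b ∈ B, p = m * b := by
  let ι : (PowerSeries k)ˣ →* (LaurentSeries k)ˣ :=
    Units.map (ofPowerSeries ℤ k).toMonoidHom
  let N := (MonoidHom.id _ * σu).ker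
  let B := ((MonoidHom.id _ / σu).comp ι).range
  have hN (p : (LaurentSeries k)ˣ) : p ∈ N ↔ (p : LaurentSeries k) * σ p = 1 := by
    rw [← hσu]; exact Units.ext_iff
  have hB (p : (LaurentSeries k)ˣ) : p ∈ B ↔ ∃ s : (PowerSeries k)ˣ,
      (p : LaurentSeries k) = ofPowerSeries ℤ k s / σ (ofPowerSeries ℤ k s) := by
    refine exists_congr fun s => ?_
    rw [eq_comm, Units.ext_iff, MonoidHom.comp_apply, MonoidHom.div_apply,
      Units.val_div_eq_div_val, hσu]
    rfl
  have hBN : B ≤ N := by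
    rintro _ ⟨s, rfl⟩
    refine MonoidHom.range_div_le_ker_mul σu (fun p => Units.ext ?_) ⟨ι s, rfl⟩
    rw [hσu, hσu, map_map_eq_self hσ]
  refine ⟨N, B, rfl, Set.ext hB, hBN, -1, by simp, (hN _).mpr (by simp), fun h => ?_,
    by simp [B.one_mem], fun p hp => ?_⟩
  · obtain ⟨s, hs⟩ := (hB _).mp h
    have hs0 : (ofPowerSeries ℤ k s).coeff 0 ≠ 0 := by
      rw [coeff_zero_ofPowerSeries]
      exact (PowerSeries.isUnit_iff_constantCoeff.mp s.isUnit).ne_zero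
    exact div_map_ne_neg_one hσ h2 hs0 (by simpa using hs.symm)
  rcases exists_div_map_eq_or_eq_neg_of_mul_map_eq_one hσ h2 ((hN p).mp hp) with
    ⟨s, hs⟩ | ⟨s, hs⟩
  · exact .inl ((hB p).mpr ⟨s, hs.symm⟩)
  · exact .inr ⟨-p, (hB _).mpr ⟨s, (Units.val_neg p).trans hs.symm⟩, by simp⟩
end

section
/- Let R be a semilocal commutative ring (a commutative ring with only finitely many maximal ideals). Then the Picard group Pic(R) is trivial. -/
open TensorProduct

theorem pic_semilocal_trivial_general (R : Type*) [CommRing R]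
    (hsemi : {I : Ideal R | I.IsMaximal}.Finite)
    (M : Type*) [AddCommGroup M] [Module R M]
    (M' : Type*) [AddCommGroup M'] [Module R M']
    (e : Nonempty ((M ⊗[R] M') ≃ₗ[R] R)) :
    Nonempty (M ≃ₗ[R] R) := by
  have : Finite (MaximalSpectrum R) :=
    (MaximalSpectrum.equivSubtype R).finite_iff.mpr hsemi.to_subtype
  have : Module.Invertible R M := .left e.some
  exact Module.Invertible.free_iff_linearEquiv.mp inferInstance

/-- Over a semilocal commutative ring `R` (finitely many maximal ideals), every invertible
module (finitely generated projective `M` with `M ⊗ M' ≅ R` for some `M'`) is free of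
rank one; equivalently `Pic(R)` is trivial. -/
theorem pic_semilocal_trivial (R : Type*) [CommRing R]
    (hsemi : {I : Ideal R | I.IsMaximal}.Finite)
    (M : Type*) [AddCommGroup M] [Module R M] [Module.Finite R M] [Module.Projective R M]
    (M' : Type*) [AddCommGroup M'] [Module R M']
    (e : Nonempty ((M ⊗[R] M') ≃ₗ[R] R)) :
    Nonempty (M ≃ₗ[R] R) :=
  pic_semilocal_trivial_general R hsemi M M' e
end
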